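/- arXiv:0809.1395 — 2 statements merged into one kernel-verified Lean document; each statement's English description precedes it below -/
import Mathlib

section
/- Let (x, y, z) ∈ M, identified as an abelian group with Q ⊕ I[G] ⊕ P. If (x, y, z) is fixed by every element of G34, then y = N34·y1 − p·y2 for some y1 ∈ Z[G12] and y2 ∈ Z[G] satisfying ε(y2) = p·ε(y1), where N34 = Σ_{g ∈ G34} g ∈ Z[G] and ε : Z[G] → Z is the augmentation map. -/
open MonoidAlgebra

set_option maxHeartbeats 1000000
set_option synthInstance.maxHeartbeats 400000

noncomputable section

/-! ## Generic (unbundled) group-cohomology notions in low degree -/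

/-- `f : G → A` is a 1-cocycle for the (unbundled) action `act`. -/
def IsOneCocycle {G : Type*} [Group G] {A : Type*} [AddCommGroup A]
    (act : G → A → A) (f : G → A) : Prop :=
  ∀ g h : G, f (g * h) = act g (f h) + f g

/-- `f : G → A` is a 1-coboundary for the (unbundled) action `act`. -/
def IsOneCoboundary {G : Type*} [Group G] {A : Type*} [AddCommGroup A]
    (act : G → A → A) (f : G → A) : Prop :=
  ∃ a : A, ∀ g : G, f g = act g a - a

/-- `f : G → G → A` is a 2-coboundary for the (unbundled) action `act`. -/
def IsTwoCoboundary {G : Type*} [Group G] {A : Type*} [AddCommGroup A]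
    (act : G → A → A) (f : G → G → A) : Prop :=
  ∃ c : G → A, ∀ g h : G, f g h = act g (c h) - c (g * h) + c g

/-- restriction of an (unbundled) action to a subgroup. -/
def resAct {G : Type*} [Group G] {A : Type*} (H : Subgroup G) (act : G → A → A) :
    H → A → A := fun h => act (h : G)

/-! ## Augmentation ideal for a general group -/

/-- the augmentation map `Z[G] → Z`. -/
def augGen (G : Type*) [Group G] : MonoidAlgebra ℤ G →+* ℤ :=
  (MonoidAlgebra.lift ℤ ℤ G 1).toRingHom

/-- the augmentation ideal `I[G] ⊆ Z[G]`. -/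
def IGen (G : Type*) [Group G] : Ideal (MonoidAlgebra ℤ G) := RingHom.ker (augGen G)

/-- the action of `G` on `I[G]` by left multiplication. -/
def actIGen (G : Type*) [Group G] (g : G) (y : ↥(IGen G)) : ↥(IGen G) :=
  ⟨of ℤ G g * y.val, by
    have h0 : augGen G y.val = 0 := y.2
    simp [IGen, RingHom.mem_ker, map_mul, h0]⟩

/-- the distinguished 1-cocycle `d_H : H → I[G]`, `h ↦ h - 1`. -/
def dGen {G : Type*} [Group G] (H : Subgroup G) (h : H) : ↥(IGen G) :=
  ⟨of ℤ G (h : G) - 1, by simp [IGen, RingHom.mem_ker, map_sub, augGen]⟩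

/-! ## The groups of the paper -/

/-- the elementary abelian group `G₁₂` of order `p²`. -/
abbrev G12t (p : ℕ) := Multiplicative (ZMod p × ZMod p)
/-- a cyclic group of order `p`. -/
abbrev Cpt (p : ℕ) := Multiplicative (ZMod p)
/-- the elementary abelian group `G = ⟨σ₁⟩ × ⟨σ₂⟩ × ⟨σ₃⟩ × ⟨σ₄⟩` of order `p⁴`. -/
abbrev Gp (p : ℕ) := Multiplicative (ZMod p × ZMod p × ZMod p × ZMod p)

def t1 (p : ℕ) : G12t p := Multiplicative.ofAdd (1, 0)
def t2 (p : ℕ) : G12t p := Multiplicative.ofAdd (0, 1)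
def c1g (p : ℕ) : Cpt p := Multiplicative.ofAdd 1
def s1 (p : ℕ) : Gp p := Multiplicative.ofAdd (1, 0, 0, 0)
def s2 (p : ℕ) : Gp p := Multiplicative.ofAdd (0, 1, 0, 0)
def s3 (p : ℕ) : Gp p := Multiplicative.ofAdd (0, 0, 1, 0)
def s4 (p : ℕ) : Gp p := Multiplicative.ofAdd (0, 0, 0, 1)

/-- the group ring `Z[G₁₂]`. -/
abbrev R12 (p : ℕ) := MonoidAlgebra ℤ (G12t p)
/-- the group ring `Z[⟨σ⟩]` of a cyclic group of order `p`. -/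
abbrev RCp (p : ℕ) := MonoidAlgebra ℤ (Cpt p)
/-- the group ring `Z[G]`. -/
abbrev RG (p : ℕ) := MonoidAlgebra ℤ (Gp p)

/-- the quotient map `G → G₁₂ = G/G₃₄`. -/
def π12 (p : ℕ) : Gp p →* G12t p :=
  AddMonoidHom.toMultiplicative
    { toFun := fun v => (v.1, v.2.1), map_zero' := rfl, map_add' := fun _ _ => rfl }

/-- the quotient map `G → ⟨σ₃⟩ = G/⟨σ₁,σ₂,σ₄⟩`. -/
def π3 (p : ℕ) : Gp p →* Cpt p :=
  AddMonoidHom.toMultiplicative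
    { toFun := fun v => v.2.2.1, map_zero' := rfl, map_add' := fun _ _ => rfl }

/-- the quotient map `G → ⟨σ₄⟩ = G/⟨σ₁,σ₂,σ₃⟩`. -/
def π4 (p : ℕ) : Gp p →* Cpt p :=
  AddMonoidHom.toMultiplicative
    { toFun := fun v => v.2.2.2, map_zero' := rfl, map_add' := fun _ _ => rfl }

/-- the inclusion `G₁₂ → G`. -/
def emb12 (p : ℕ) : G12t p →* Gp p :=
  AddMonoidHom.toMultiplicative
    { toFun := fun v => (v.1, v.2, 0, 0), map_zero' := rfl,
      map_add' := fun _ _ => by ext <;> simp }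

/-- the subgroup `G₁₂ = ⟨σ₁, σ₂⟩ ≤ G`. -/
def G12sub (p : ℕ) : Subgroup (Gp p) := Subgroup.closure {s1 p, s2 p}
/-- the subgroup `G₃₄ = ⟨σ₃, σ₄⟩ ≤ G`. -/
def G34sub (p : ℕ) : Subgroup (Gp p) := Subgroup.closure {s3 p, s4 p}

/-! ## The lattice `A₂(G₁₂)` and its distinguished elements -/

/-- the map `Z[G₁₂]·d₁ ⊕ Z[G₁₂]·d₂ → I[G₁₂] ⊆ Z[G₁₂]`, `dᵢ ↦ σᵢ - 1`. -/
def d12map (p : ℕ) : (R12 p × R12 p) →ₗ[R12 p] R12 p :=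
  (LinearMap.toSpanSingleton (R12 p) (R12 p) (of ℤ (G12t p) (t1 p) - 1)).comp
      (LinearMap.fst (R12 p) (R12 p) (R12 p)) +
  (LinearMap.toSpanSingleton (R12 p) (R12 p) (of ℤ (G12t p) (t2 p) - 1)).comp
      (LinearMap.snd (R12 p) (R12 p) (R12 p))

/-- the lattice `A₂(G₁₂)`, the kernel of `Z[G₁₂]·d₁ ⊕ Z[G₁₂]·d₂ → I[G₁₂]`. -/
def A2G12 (p : ℕ) : Submodule (R12 p) (R12 p × R12 p) := LinearMap.ker (d12map p)

/-- `u₁₂ = (σ₂-1)d₁ - (σ₁-1)d₂` as an element of `Z[G₁₂]·d₁ ⊕ Z[G₁₂]·d₂`. -/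
def u12raw (p : ℕ) : R12 p × R12 p :=
  (of ℤ (G12t p) (t2 p) - 1, -(of ℤ (G12t p) (t1 p) - 1))

/-- the norm element `N = 1 + g + ⋯ + g^(p-1)` of a group ring. -/
def NN (p : ℕ) {G : Type*} [CommGroup G] (g : G) : MonoidAlgebra ℤ G :=
  ∑ k ∈ Finset.range p, of ℤ G g ^ k

/-- `b₁ = N₁·d₁`. -/
def b1raw (p : ℕ) : R12 p × R12 p := (NN p (t1 p), 0)
/-- `b₂ = N₂·d₂`. -/
def b2raw (p : ℕ) : R12 p × R12 p := (0, NN p (t2 p))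

lemma ofAdd_pow_p (p : ℕ) {A : Type*} [AddCommGroup A] (a : A) (h : p • a = 0) :
    (Multiplicative.ofAdd a) ^ p = 1 := by
  rw [← ofAdd_nsmul, h]; rfl

lemma zmod_p_smul (p : ℕ) (x : ZMod p) : p • x = 0 := by
  rw [nsmul_eq_mul, ZMod.natCast_self, zero_mul]

lemma t1_pow_p (p : ℕ) : (t1 p) ^ p = 1 := by
  refine ofAdd_pow_p p _ ?_
  rw [Prod.smul_mk, zmod_p_smul, zmod_p_smul]; rfl

lemma t2_pow_p (p : ℕ) : (t2 p) ^ p = 1 := by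
  refine ofAdd_pow_p p _ ?_
  rw [Prod.smul_mk, zmod_p_smul, zmod_p_smul]; rfl

lemma c1g_pow_p (p : ℕ) : (c1g p) ^ p = 1 := by
  refine ofAdd_pow_p p _ (zmod_p_smul p _)

lemma NN_mul (p : ℕ) {G : Type*} [CommGroup G] (g : G) (h : g ^ p = 1) :
    NN p g * (of ℤ G g - 1) = 0 := by
  rw [NN, geom_sum_mul, ← map_pow, h, map_one, sub_self]

lemma u12raw_mem (p : ℕ) : u12raw p ∈ A2G12 p := by
  simp only [A2G12, LinearMap.mem_ker, d12map, LinearMap.add_apply, LinearMap.comp_apply,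
    LinearMap.fst_apply, LinearMap.snd_apply, LinearMap.toSpanSingleton_apply, u12raw,
    smul_eq_mul]
  ring

lemma b1raw_mem (p : ℕ) : b1raw p ∈ A2G12 p := by
  simp only [A2G12, LinearMap.mem_ker, d12map, LinearMap.add_apply, LinearMap.comp_apply,
    LinearMap.fst_apply, LinearMap.snd_apply, LinearMap.toSpanSingleton_apply, b1raw,
    smul_eq_mul, zero_mul, add_zero]
  exact NN_mul p _ (t1_pow_p p)

lemma b2raw_mem (p : ℕ) : b2raw p ∈ A2G12 p := by
  simp only [A2G12, LinearMap.mem_ker, d12map, LinearMap.add_apply, LinearMap.comp_apply,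
    LinearMap.fst_apply, LinearMap.snd_apply, LinearMap.toSpanSingleton_apply, b2raw,
    smul_eq_mul, zero_mul, zero_add]
  exact NN_mul p _ (t2_pow_p p)

/-- `u₁₂` as an element of `A₂(G₁₂)`. -/
def u12e (p : ℕ) : ↥(A2G12 p) := ⟨u12raw p, u12raw_mem p⟩
/-- `b₁` as an element of `A₂(G₁₂)`. -/
def b1e (p : ℕ) : ↥(A2G12 p) := ⟨b1raw p, b1raw_mem p⟩
/-- `b₂` as an element of `A₂(G₁₂)`. -/
def b2e (p : ℕ) : ↥(A2G12 p) := ⟨b2raw p, b2raw_mem p⟩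

/-- the action of `G₁₂` on `A₂(G₁₂)`. -/
def actA2 (p : ℕ) (x : G12t p) (v : ↥(A2G12 p)) : ↥(A2G12 p) :=
  of ℤ (G12t p) x • v

/-! ## The cyclic lattice `A₂(⟨σ⟩)` -/

/-- the map `Z[⟨σ⟩]·d → I[⟨σ⟩]`, `d ↦ σ - 1`. -/
def dcmap (p : ℕ) : RCp p →ₗ[RCp p] RCp p :=
  LinearMap.toSpanSingleton (RCp p) (RCp p) (of ℤ (Cpt p) (c1g p) - 1)

/-- the lattice `A₂(⟨σ⟩)` for a cyclic group of order `p`. -/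
def A2C (p : ℕ) : Submodule (RCp p) (RCp p) := LinearMap.ker (dcmap p)

/-- the norm element `N = 1 + σ + ⋯ + σ^(p-1)` as an element of `A₂(⟨σ⟩)`. -/
def NCe (p : ℕ) : ↥(A2C p) :=
  ⟨NN p (c1g p), by
    simp only [A2C, LinearMap.mem_ker, dcmap, LinearMap.toSpanSingleton_apply, smul_eq_mul]
    exact NN_mul p _ (c1g_pow_p p)⟩

/-- the action of `G` on `A₂(⟨σⱼ⟩)` through a projection `π : G → ⟨σⱼ⟩`. -/
def actCvia (p : ℕ) (π : Gp p →* Cpt p) (g : Gp p) (v : ↥(A2C p)) : ↥(A2C p) :=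
  of ℤ (Cpt p) (π g) • v

/-! ## The explicit canonical 2-cocycles -/

/-- the elements `u_{m,n} ∈ A₂(G₁₂)` (equation (13) of the paper). -/
def umn (p : ℕ) (m1 m2 n1 n2 : ℕ) : ↥(A2G12 p) :=
  (-(of ℤ (G12t p) (t1 p ^ m1) * ∑ j ∈ Finset.range n1, ∑ i ∈ Finset.range m2,
      of ℤ (G12t p) (t1 p ^ i * t2 p ^ j))) • u12e p +
  (of ℤ (G12t p) (t1 p ^ n1) * ∑ j ∈ Finset.range n2, ∑ i ∈ Finset.range m1,
      of ℤ (G12t p) (t1 p ^ i * t2 p ^ j)) • u12e p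

/-- the explicit 2-cocycle `c₁₂` representing the canonical class `[c_{G₁₂}]`. -/
def c12coc (p : ℕ) (x y : G12t p) : ↥(A2G12 p) :=
  let m1 := (Multiplicative.toAdd x).1.val
  let m2 := (Multiplicative.toAdd x).2.val
  let n1 := (Multiplicative.toAdd y).1.val
  let n2 := (Multiplicative.toAdd y).2.val
  of ℤ (G12t p) (t1 p ^ m1) • umn p 0 m2 n1 0 +
    ((m1 + n1) / p) • b1e p +
    ((m2 + n2) / p) • (of ℤ (G12t p) (t1 p ^ ((m1 + n1) % p)) • b2e p)

/-- the explicit 2-cocycle representing the canonical class of a cyclic group of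
order `p` with coefficients in `A₂(⟨σ⟩)`. -/
def ccyc (p : ℕ) (x y : Cpt p) : ↥(A2C p) :=
  if p ≤ (Multiplicative.toAdd x).val + (Multiplicative.toAdd y).val then NCe p else 0

/-! ## The lattice `Q = A₂(G₁₂) ⊕ K₃ ⊕ K₄` -/

/-- `K_j = A₂(⟨σⱼ⟩) ⊕ Z[⟨σⱼ⟩]`. -/
abbrev Kc (p : ℕ) := ↥(A2C p) × RCp p

/-- the carrier of the `G`-lattice `Q = A₂(G₁₂) ⊕ K₃ ⊕ K₄`. -/
abbrev Qc (p : ℕ) := ↥(A2G12 p) × Kc p × Kc p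

/-- the action of `G` on `Q`: `G₁₂` acts naturally on `A₂(G₁₂)` and trivially on
`K₃`, `K₄`; `⟨σⱼ⟩` acts naturally on `K_j` and trivially elsewhere. -/
def actQ (p : ℕ) (g : Gp p) (q : Qc p) : Qc p :=
  (of ℤ (G12t p) (π12 p g) • q.1,
   (of ℤ (Cpt p) (π3 p g) • q.2.1.1, of ℤ (Cpt p) (π3 p g) * q.2.1.2),
   (of ℤ (Cpt p) (π4 p g) • q.2.2.1, of ℤ (Cpt p) (π4 p g) * q.2.2.2))

/-- the 2-cocycle `ω = inf(c₁₂) - inf(c₃) - inf(c₄)` with values in `Q`. -/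
def ωc (p : ℕ) (g g' : Gp p) : Qc p :=
  (c12coc p (π12 p g) (π12 p g'),
   (-(ccyc p (π3 p g) (π3 p g')), 0),
   (-(ccyc p (π4 p g) (π4 p g')), 0))

/-- the order of the restriction of `[ω]` to a subgroup `H ≤ G` in `H²(H, Q)`. -/
def nOrd (p : ℕ) (H : Subgroup (Gp p)) : ℕ :=
  sInf {n : ℕ | 0 < n ∧
    IsTwoCoboundary (resAct H (actQ p)) fun h h' => n • ωc p (h : Gp p) (h' : Gp p)}

/-! ## The augmentation ideal `I[G]` and the lattice `M_ω` -/

/-- the augmentation map `Z[G] → Z`. -/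
def aug (p : ℕ) : RG p →+* ℤ := (MonoidAlgebra.lift ℤ ℤ (Gp p) 1).toRingHom

/-- the augmentation ideal `I[G]`. -/
def IG (p : ℕ) : Ideal (RG p) := RingHom.ker (aug p)

/-- the action of `G` on `I[G]` by left multiplication. -/
def actIG (p : ℕ) (g : Gp p) (y : ↥(IG p)) : ↥(IG p) :=
  ⟨of ℤ (Gp p) g * y.val, by
    have h0 : aug p y.val = 0 := y.2
    simp [IG, RingHom.mem_ker, map_mul, h0]⟩

/-- the 1-cocycle `d_H : H → I[G]`, `h ↦ h - 1`. -/
def dH (p : ℕ) (H : Subgroup (Gp p)) (h : H) : ↥(IG p) :=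
  ⟨of ℤ (Gp p) (h : Gp p) - 1, by simp [IG, RingHom.mem_ker, map_sub, aug]⟩

/-- the carrier of the `G`-lattice `M_ω = Q ⊕ I[G]`. -/
abbrev Mc (p : ℕ) := Qc p × ↥(IG p)

/-- the `Q`-valued correction term of the twisted action on `M_ω`:
`θ(g, Σ a_{g'} g') = Σ a_{g'} ω(g, g')`; on `y ∈ I[G]` (so `Σ a_{g'} = 0` and
`y = Σ a_{g'} (g' - 1)`) this is the `Q`-component of `g·(0, y)`. -/
def θω (p : ℕ) (g : Gp p) (y : RG p) : Qc p :=
  Finsupp.sum y.coeff fun g' a => a • ωc p g g'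

/-- the twisted action of `G` on `M_ω = Q ⊕ I[G]`: `g(x,0) = (gx, 0)` and
`g(0, g'-1) = (ω(g,g'), g(g'-1))`, extended `Z`-linearly. -/
def actM (p : ℕ) (g : Gp p) (m : Mc p) : Mc p :=
  (actQ p g m.1 + θω p g m.2.val, actIG p g m.2)

/-! ## The map `π : A₂(G₁₂) → Z/pZ` -/

/-- the `G₁₂`-module homomorphism `π : A₂(G₁₂) → Z/pZ`, determined by
`π(x·u₁₂ + y·b₁ + z·b₂) = ε(x) mod p`; concretely it sends `v = (v₁, v₂)` to
`Σ_g v₁(g)·(exponent of σ₂ in g)`. -/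
def πmap (p : ℕ) (v : ↥(A2G12 p)) : ZMod p :=
  Finsupp.sum (v : R12 p × R12 p).1.coeff fun g a => (a : ZMod p) * (Multiplicative.toAdd g).2

/-! ## The set `𝓗` of subgroups, the cochains `v_H`, and the lattice `M` -/

/-- the set of subgroups `𝓗 = {G} ∪ {⟨τ, σ₃, σ₄⟩ : τ ∈ G₁₂}`. -/
def HH (p : ℕ) : Set (Subgroup (Gp p)) :=
  insert ⊤ {H | ∃ τ ∈ G12sub p, H = Subgroup.closure {τ, s3 p, s4 p}}

/-- the 1-cochain `v_H : H₁₂ → A₂(G₁₂)`, `v_H(h̄₁) = Σ_{h̄ ∈ H₁₂} c₁₂(h̄₁, h̄)`,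
here inflated to a function of `h̄₁ ∈ G₁₂`. -/
def vH (p : ℕ) (H : Subgroup (Gp p)) (x : G12t p) : ↥(A2G12 p) :=
  ∑ᶠ h' : ↥(H.map (π12 p)), c12coc p x (h' : G12t p)

/-- the 1-cochain `f_H : H → M_ω`, `f_H(h) = (z_H(h) - v_H(h̄), n_H·(h-1))`,
built from a choice of 1-cochain `z_H : H → K₃ ⊕ K₄`. -/
def fHof (p : ℕ) (H : Subgroup (Gp p)) (zH : H → Kc p × Kc p) (h : H) : Mc p :=
  ((-(vH p H (π12 p (h : Gp p))), (zH h).1, (zH h).2),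
   (nOrd p H) • dH p H h)

/-- the carrier of the permutation lattice `P = ⊕_{H ∈ 𝓗} Z[G/H]`. -/
abbrev Pc (p : ℕ) := ∀ H : ↥(HH p), ((Gp p ⧸ (H : Subgroup (Gp p))) →₀ ℤ)

/-- the carrier of the `G`-lattice `M = M_ω ⊕ P`. -/
abbrev MC (p : ℕ) := Mc p × Pc p

/-- the action of `G` on `M = M_ω ⊕ P`, twisted by a family of 1-cocycles
`f_H : H → M_ω` (`H ∈ 𝓗`): `g(x, 0) = (gx, 0)` and
`g(0, u_{gᵢH}) = (gⱼ·f_H(h), u_{gⱼH})` where `g·gᵢ = gⱼ·h`, `h ∈ H`, and the coset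
representatives are chosen by `Quotient.out`. -/
def actMFull (p : ℕ) (fH : ∀ H : ↥(HH p), (↥(H.val) → Mc p))
    (g : Gp p) (m : MC p) : MC p :=
  (actM p g m.1 +
     ∑ᶠ H : ↥(HH p), Finsupp.sum (m.2 H) fun c a =>
       a • actM p (Quotient.out (g • c))
         (fH H ⟨(Quotient.out (g • c))⁻¹ * (g * Quotient.out c), by
            rw [← QuotientGroup.eq, QuotientGroup.out_eq', ← smul_eq_mul,
              MulAction.Quotient.mk_smul_out]⟩),
   fun H => Finsupp.mapDomain (fun c => g • c) (m.2 H))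

/-- the map `π' : M → Z/pZ`, `(x₀, x₁, x₂, y, z) ↦ π(x₀)`. -/
def πmap' (p : ℕ) (m : MC p) : ZMod p := πmap p m.1.1.1

/-- the norm element `N₃₄ = Σ_{g ∈ G₃₄} g ∈ Z[G]`. -/
def N34 (p : ℕ) : RG p := ∑ᶠ g : ↥(G34sub p), of ℤ (Gp p) (g : Gp p)

/-- the augmentation map `Z[G₁₂] → Z`. -/
def aug12 (p : ℕ) : R12 p →+* ℤ := (MonoidAlgebra.lift ℤ ℤ (G12t p) 1).toRingHom

/-! For `g ∈ G₃₄` and `H ∈ 𝓗` we have `G₃₄ ≤ H`, so `g` fixes every coset `gᵢH` and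
`gᵢ⁻¹ g gᵢ = g`; hence the `I[G]`-component of `g·(x, y, z)` is `g·y + w·(g - 1)` with
`w = Σ z(gᵢH)·n_H·gᵢ`. Invariance under `G₃₄` makes `y + w` a `G₃₄`-invariant element of `Z[G]`,
i.e. `N₃₄·y₁` with `y₁ ∈ Z[G₁₂]`.

Every `n_H` is divisible by `p`: if `n·ω` is a coboundary `∂c` on `H ∋ σ₃`, project to the
summand `A₂(⟨σ₃⟩)`, on which `σ₃` acts trivially, and sum `∂c(σ₃, σ₃ᵏ)` over `k < p`; the sum
telescopes to `p·c(σ₃)`, while `Σ_k c₃(σ₃, σ₃ᵏ) = N`, whose coefficient at `1` is `1`. So `w = p·y₂`,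
and applying `ε` to `y = N₃₄·y₁ - p·y₂ ∈ I[G]` gives `p²·ε(y₁) = p·ε(y₂)`. -/

theorem MonoidAlgebra.eq_finsum_of_mul_mapDomain_comapDomain {R G H : Type*} [Semiring R]
    [Group G] [Group H] (r : G →* H) (i : H →* G) (hri : Function.LeftInverse r i)
    [Finite r.ker] (x : MonoidAlgebra R G) (hx : ∀ k ∈ r.ker, of R G k * x = x) :
    x = (∑ᶠ k : r.ker, of R G k) *
      mapDomain i (comapDomain i hri.injective x) := by
  have : Fintype r.ker := Fintype.ofFinite _
  ext g
  set k₀ : r.ker := ⟨g * (i (r g))⁻¹, by simp [hri (r g)]⟩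
  have hk₀ : (k₀ : G)⁻¹ * g = i (r g) := by simp [k₀]
  rw [finsum_eq_sum_of_fintype, Finset.sum_mul, coeff_sum, Finsupp.finsetSum_apply,
    Finset.sum_eq_single k₀]
  · rw [of_apply, coeff_single_mul_apply, one_mul, hk₀, coeff_mapDomain,
      Finsupp.mapDomain_apply hri.injective, coeff_comapDomain, Finsupp.comapDomain_apply, ← hk₀]
    conv_lhs => rw [← hx _ k₀.2]
    rw [of_apply, coeff_single_mul_apply, one_mul]
  · intro k _ hk
    rw [of_apply, coeff_single_mul_apply, coeff_mapDomain,
      Finsupp.mapDomain_of_notMem_range _ _ ?_, mul_zero]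
    rintro ⟨h, hh⟩
    have hrh : h = r g := by
      simpa [hri h, MonoidHom.mem_ker.mp k.2] using congrArg r hh
    exact hk (Subtype.ext (by simp [k₀, ← hrh, hh]))
  · simp

lemma sum_range_coboundary_pow {H A : Type*} [Group H] [AddCommGroup A] (c : H → A) {s : H}
    {n : ℕ} (hs : s ^ n = 1) :
    ∑ k ∈ Finset.range n, (c (s ^ k) - c (s * s ^ k) + c s) = n • c s := by
  simp_rw [← pow_succ']
  rw [Finset.sum_add_distrib, Finset.sum_range_sub' (fun k => c (s ^ k)), hs, pow_zero, sub_self,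
    zero_add, Finset.sum_const, Finset.card_range]

lemma coeff_one_NN {p : ℕ} {G : Type*} [CommGroup G] {g : G} (hg : orderOf g = p) (hp : 0 < p) :
    (NN p g).coeff 1 = 1 := by
  classical
  rw [NN, coeff_sum, Finsupp.finsetSum_apply, Finset.sum_eq_single 0]
  · simp
  · intro k hk hk0
    rw [← map_pow, of_apply, coeff_single, Finsupp.single_apply,
      if_neg (pow_ne_one_of_lt_orderOf hk0 (hg ▸ Finset.mem_range.mp hk))]
  · simp [hp]

section

variable {p : ℕ}

lemma G34sub_eq_ker [NeZero p] : G34sub p = (π12 p).ker := by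
  refine le_antisymm ((Subgroup.closure_le _).mpr ?_) fun g hg => ?_
  · rintro _ (rfl | rfl) <;> rfl
  · have hg' : (Multiplicative.toAdd g).1 = 0 ∧ (Multiplicative.toAdd g).2.1 = 0 := by
      simpa [π12, Prod.ext_iff] using congrArg Multiplicative.toAdd (MonoidHom.mem_ker.mp hg)
    have : g = s3 p ^ (Multiplicative.toAdd g).2.2.1.val *
        s4 p ^ (Multiplicative.toAdd g).2.2.2.val := by
      apply Multiplicative.toAdd.injective
      simp [s3, s4, toAdd_pow, Prod.ext_iff, hg']
    rw [this]
    exact mul_mem (pow_mem (Subgroup.subset_closure (by simp)) _)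
      (pow_mem (Subgroup.subset_closure (by simp)) _)

lemma G34sub_le_of_mem_HH {H : Subgroup (Gp p)} (hH : H ∈ HH p) : G34sub p ≤ H := by
  rcases hH with rfl | ⟨τ, -, rfl⟩
  · exact le_top
  · exact Subgroup.closure_mono (Set.subset_insert _ _)

lemma card_G34sub [NeZero p] : Nat.card (G34sub p) = p ^ 2 := by
  have h := Subgroup.card_mul_index (π12 p).ker
  rw [Subgroup.index_ker, MonoidHom.range_eq_top_of_surjective _ (fun w => ⟨emb12 p w, rfl⟩),
    Subgroup.card_top] at h
  simp only [Nat.card_eq_fintype_card, Fintype.card_multiplicative, Fintype.card_prod,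
    ZMod.card] at h
  rw [G34sub_eq_ker, Nat.card_eq_fintype_card]
  exact Nat.eq_of_mul_eq_mul_right (Nat.mul_pos (NeZero.pos p) (NeZero.pos p)) (by rw [h]; ring)

lemma aug_N34 [NeZero p] : aug p (N34 p) = p ^ 2 := by
  classical
  rw [N34, finsum_eq_sum_of_fintype, map_sum]
  simp [aug, ← Nat.card_eq_fintype_card, card_G34sub]

lemma aug_mapDomain_emb12 (y : R12 p) : aug p (mapDomain (emb12 p) y) = aug12 p y := by
  induction y using MonoidAlgebra.induction_linear with
  | zero => simp
  | add a b ha hb => rw [mapDomain_add, map_add, map_add, ha, hb]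
  | single g a => simp [aug, aug12]

lemma coeff_one_NCe (hp : 0 < p) : ((NCe p : A2C p) : RCp p).coeff 1 = 1 :=
  coeff_one_NN (by rw [c1g, orderOf_ofAdd_eq_addOrderOf, ZMod.addOrderOf_one]) hp

lemma of_c1g_smul_A2C (v : A2C p) : of ℤ (Cpt p) (c1g p) • v = v := by
  have hv : (v : RCp p) * (of ℤ (Cpt p) (c1g p) - 1) = 0 := v.2
  exact Subtype.ext (by rw [SetLike.val_smul, smul_eq_mul]; linear_combination hv)

lemma sum_ccyc (hp : 1 < p) :
    ∑ k ∈ Finset.range p, ccyc p (c1g p) (c1g p ^ k) = NCe p := by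
  have : Fact (1 < p) := ⟨hp⟩
  have hterm : ∀ k ∈ Finset.range p,
      ccyc p (c1g p) (c1g p ^ k) = if k = p - 1 then NCe p else 0 := by
    intro k hk
    have hk' := Finset.mem_range.mp hk
    simp only [ccyc, c1g, ← ofAdd_nsmul, toAdd_ofAdd, nsmul_eq_mul, mul_one, ZMod.val_one,
      ZMod.val_cast_of_lt hk']
    exact if_congr (by omega) rfl rfl
  rw [Finset.sum_congr rfl hterm, Finset.sum_ite_eq' (Finset.range p) (p - 1),
    if_pos (Finset.mem_range.mpr (by omega))]

lemma dvd_of_isTwoCoboundary_smul_ωc (hp : 1 < p) {H : Subgroup (Gp p)} (h3 : s3 p ∈ H) {n : ℕ}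
    (hcb : IsTwoCoboundary (resAct H (actQ p)) fun h h' => n • ωc p (h : Gp p) (h' : Gp p)) :
    p ∣ n := by
  obtain ⟨c, hc⟩ := hcb
  let s : H := ⟨s3 p, h3⟩
  let b : H → A2C p := fun h => (c h).2.1.1
  have hs : s ^ p = 1 := Subtype.ext (by simp [s, s3, ← ofAdd_nsmul])
  have hk : ∀ k : ℕ, -(n • ccyc p (c1g p) (c1g p ^ k)) = b (s ^ k) - b (s * s ^ k) + b s := by
    intro k
    have h := congrArg (fun q : Qc p => q.2.1.1) (hc s (s ^ k))
    simp only [resAct, actQ, ωc, Prod.smul_fst, Prod.fst_add, Prod.snd_add, Prod.fst_sub,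
      Prod.snd_sub, Prod.smul_snd] at h
    rw [SubmonoidClass.coe_pow, map_pow, show π3 p (s : Gp p) = c1g p from rfl,
      of_c1g_smul_A2C, smul_neg] at h
    exact h
  have hsum := Finset.sum_congr rfl fun k (_ : k ∈ Finset.range p) => hk k
  rw [sum_range_coboundary_pow b hs, Finset.sum_neg_distrib, ← Finset.smul_sum, sum_ccyc hp] at hsum
  have := congrArg (fun v : A2C p => (v : RCp p).coeff 1) hsum
  simp only [Submodule.coe_neg, AddSubmonoidClass.coe_nsmul, coeff_neg, coeff_smul_apply,
    Finsupp.neg_apply, coeff_one_NCe (by omega : 0 < p)] at this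
  simp only [nsmul_eq_mul, mul_one] at this
  exact Int.natCast_dvd_natCast.mp (dvd_neg.mp ⟨_, this⟩)

lemma p_dvd_nOrd (hp : 1 < p) {H : Subgroup (Gp p)} (hH : H ∈ HH p) : p ∣ nOrd p H := by
  rcases Set.eq_empty_or_nonempty {n : ℕ | 0 < n ∧ IsTwoCoboundary (resAct H (actQ p))
      fun h h' => n • ωc p (h : Gp p) (h' : Gp p)} with hemp | hne
  · rw [nOrd, hemp, Nat.sInf_empty]
    exact dvd_zero p
  · exact dvd_of_isTwoCoboundary_smul_ωc hp (G34sub_le_of_mem_HH hH (Subgroup.subset_closure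
      (by simp))) (Nat.sInf_mem hne).2

def augIdealComponent : Mc p →+ RG p where
  toFun x := x.2
  map_zero' := rfl
  map_add' _ _ := rfl

lemma augIdealComponent_actM (g : Gp p) (x : Mc p) :
    augIdealComponent (actM p g x) = of ℤ (Gp p) g * augIdealComponent x := rfl

lemma augIdealComponent_fHof (H : Subgroup (Gp p)) (z : H → Kc p × Kc p) (h : H) :
    augIdealComponent (fHof p H z h) = nOrd p H • (of ℤ (Gp p) h - 1) := by
  simp [augIdealComponent, fHof, dH]

def cosetWeight (n : Subgroup (Gp p) → ℕ) (z : Pc p) : RG p :=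
  ∑ᶠ H : HH p, (z H).sum fun c a => (a * n H) • of ℤ (Gp p) c.out

lemma cosetWeight_eq_smul [NeZero p] {n k : Subgroup (Gp p) → ℕ} (h : ∀ H ∈ HH p, n H = p * k H)
    (z : Pc p) : cosetWeight n z = (p : ℤ) • cosetWeight k z := by
  have : Fintype (HH p) := Fintype.ofFinite _
  rw [cosetWeight, cosetWeight, finsum_eq_sum_of_fintype, finsum_eq_sum_of_fintype,
    Finset.smul_sum]
  refine Finset.sum_congr rfl fun H _ => ?_
  rw [Finsupp.smul_sum]
  refine Finsupp.sum_congr fun c _ => ?_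
  rw [h H H.2, smul_smul]
  push_cast
  ring_nf

lemma actMFull_fst_snd_of_mem_G34sub [NeZero p] (zH : ∀ H : HH p, H.val → Kc p × Kc p)
    (m : MC p) {g : Gp p} (hg : g ∈ G34sub p) :
    ((actMFull p (fun H => fHof p H.val (zH H)) g m).1.2 : RG p) =
      of ℤ (Gp p) g * m.1.2 + cosetWeight (nOrd p) m.2 * (of ℤ (Gp p) g - 1) := by
  have : Fintype (HH p) := Fintype.ofFinite _
  have hgc : ∀ (H : HH p) (c : Gp p ⧸ H.val), g • c = c := fun H c => by
    induction c using QuotientGroup.induction_on with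
    | H x =>
      rw [MulAction.Quotient.smul_mk, QuotientGroup.eq, smul_eq_mul, mul_inv_rev, mul_comm x⁻¹ g⁻¹,
        inv_mul_cancel_right]
      exact inv_mem (G34sub_le_of_mem_HH H.2 hg)
  have hconj : ∀ x : Gp p, x⁻¹ * (g * x) = g := fun x => by
    rw [mul_comm g x, inv_mul_cancel_left]
  change augIdealComponent (actMFull p _ g m).1 = _
  simp only [actMFull, map_add, augIdealComponent_actM]
  rw [finsum_eq_sum_of_fintype, map_sum, cosetWeight, finsum_eq_sum_of_fintype, Finset.sum_mul]
  simp only [map_finsuppSum, map_zsmul, augIdealComponent_actM, augIdealComponent_fHof, hgc, hconj]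
  congr 1
  refine Finset.sum_congr rfl fun H _ => ?_
  rw [Finsupp.sum_mul]
  refine Finsupp.sum_congr fun c _ => ?_
  rw [mul_smul, ← Nat.cast_smul_eq_nsmul ℤ, smul_mul_assoc, smul_mul_assoc, mul_smul_comm]

end

theorem statement14_general (p : ℕ) (hp : p.Prime)
    (zH : ∀ H : ↥(HH p), (↥(H.val) → Kc p × Kc p))
    (m : MC p)
    (hm : ∀ g ∈ G34sub p, actMFull p (fun H => fHof p H.val (zH H)) g m = m) :
    ∃ (y1 : R12 p) (y2 : RG p),
      (m.1.2 : RG p) = N34 p * (MonoidAlgebra.mapDomainRingHom ℤ (emb12 p) y1)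
          - (p : ℤ) • y2 ∧
      aug p y2 = p * aug12 p y1 := by
  have : NeZero p := ⟨hp.ne_zero⟩
  set y : RG p := (m.1.2 : RG p)
  have hinv : ∀ g ∈ (π12 p).ker, of ℤ (Gp p) g * (y + cosetWeight (nOrd p) m.2) =
      y + cosetWeight (nOrd p) m.2 := by
    intro g hg
    rw [← G34sub_eq_ker] at hg
    have h := actMFull_fst_snd_of_mem_G34sub zH m hg
    rw [hm g hg] at h
    linear_combination -h
  have hy := eq_finsum_of_mul_mapDomain_comapDomain (π12 p) (emb12 p) (fun _ => rfl) _ hinv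
  rw [← G34sub_eq_ker, ← N34, cosetWeight_eq_smul fun H hH =>
    (Nat.mul_div_cancel' (p_dvd_nOrd hp.one_lt hH)).symm] at hy
  set y1 := comapDomain (emb12 p) _ (y + _)
  set y2 := cosetWeight (fun H => nOrd p H / p) m.2
  refine ⟨y1, y2, eq_sub_of_add_eq hy, ?_⟩
  have haug := congrArg (aug p) hy
  rw [map_add, map_zsmul, map_mul, aug_N34, aug_mapDomain_emb12,
    show aug p y = 0 from m.1.2.2, smul_eq_mul, zero_add] at haug
  refine mul_left_cancel₀ (Nat.cast_ne_zero.mpr hp.ne_zero : (p : ℤ) ≠ 0) ?_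
  linear_combination haug

theorem statement14 (p : ℕ) [NeZero p] (hp : p.Prime) (hodd : p ≠ 2)
    (zH : ∀ H : ↥(HH p), (↥(H.val) → Kc p × Kc p))
    (hz : ∀ H : ↥(HH p), IsOneCocycle (resAct H.val (actM p)) (fHof p H.val (zH H)))
    (m : MC p)
    (hm : ∀ g ∈ G34sub p, actMFull p (fun H => fHof p H.val (zH H)) g m = m) :
    ∃ (y1 : R12 p) (y2 : RG p),
      (m.1.2 : RG p) = N34 p * (MonoidAlgebra.mapDomainRingHom ℤ (emb12 p) y1)
          - (p : ℤ) • y2 ∧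
      aug p y2 = p * aug12 p y1 :=
  statement14_general p hp zH m hm

end
end

section
/- Assume p ≠ 2. The map π' : M^{G34} → Z/pZ defined by π'((x0, x1, x2), y, z) = π(x0), for (x0, x1, x2) ∈ A_2(G12) ⊕ K3 ⊕ K4 = Q, y ∈ I[G], z ∈ P, is a G-module homomorphism where G acts trivially on Z/pZ; in particular it extends π on A_2(G12), which lies in M^{G34}. -/
open MonoidAlgebra

set_option maxHeartbeats 1000000
set_option synthInstance.maxHeartbeats 400000

noncomputable section

/-!
`π'` only reads the `A₂(G₁₂)`-coordinate, so additivity is clear and the content is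
`G`-invariance on `M^{G₃₄}`. Write `π` as the weighted sum `x ↦ Σ_g x₁(g)·e₂(g) mod p`, where
`eᵢ` is the exponent of `σᵢ`. On `A₂(G₁₂)` the augmentation of `x₁` vanishes mod `p`, which makes
`π` invariant under `G₁₂`, and `π(c₁₂(x, y)) = -e₁(y)·e₂(x)`. Hence `π(g·m) - π(m)` is `-e₂(g)`
times the `e₁`-weight of the `I[G]`-part `y` of `m`, plus `π` of translates of values of the
`f_H`. The latter vanish: `π(v_H) = -e₂ · Σ_{H₁₂} e₁ = 0` since `p` is odd, and `p ∣ n_H` since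
`σ₃ ∈ H` and the canonical class of `⟨σ₃⟩` has order `p`. Finally `σ₃`-invariance of `m` kills the
`e₁`-weight of `y`: translation by `σ₃` changes the `e₁e₃`-weight of `y` by exactly its
`e₁`-weight, and changes the `I[G]`-part only by multiples of the `n_H`.
-/

section WeightedSum

variable {G R : Type*} [CommRing R]

def weightedSum (F : G → R) : MonoidAlgebra ℤ G →+ R where
  toFun x := x.coeff.sum fun g a => (a : R) * F g
  map_zero' := Finsupp.sum_zero_index
  map_add' x y := Finsupp.sum_add_index' (fun _ => by simp) fun _ _ _ => by push_cast; ring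

lemma weightedSum_apply (F : G → R) (x : MonoidAlgebra ℤ G) :
    weightedSum F x = x.coeff.sum fun g a => (a : R) * F g := rfl

lemma weightedSum_single (F : G → R) (g : G) (a : ℤ) :
    weightedSum F (single g a) = a * F g := by
  rw [weightedSum_apply, MonoidAlgebra.coeff_single, Finsupp.sum_single_index (by simp)]

lemma weightedSum_add_weight (F E : G → R) (x : MonoidAlgebra ℤ G) :
    weightedSum (F + E) x = weightedSum F x + weightedSum E x := by
  simp only [weightedSum_apply, Pi.add_apply, mul_add, Finsupp.sum_add]

lemma weightedSum_const_mul (c : R) (F : G → R) (x : MonoidAlgebra ℤ G) :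
    weightedSum (fun g => c * F g) x = c * weightedSum F x := by
  simp only [weightedSum_apply, Finsupp.mul_sum]
  exact Finsupp.sum_congr fun _ _ => by ring

lemma weightedSum_of_mul [Monoid G] (F : G → R) (τ : G) (x : MonoidAlgebra ℤ G) :
    weightedSum F (of ℤ G τ * x) = weightedSum (fun g => F (τ * g)) x := by
  induction x using MonoidAlgebra.induction_linear with
  | zero => simp
  | add x y hx hy => rw [mul_add, map_add, map_add, hx, hy]
  | single g a => simp [weightedSum_single, MonoidAlgebra.single_mul_single]

lemma weightedSum_eq_zero_of_of_mul [Monoid G] {F E : G → R} {τ : G}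
    (hF : ∀ g, F (τ * g) = F g + E g) {x : MonoidAlgebra ℤ G} (hx : weightedSum F (of ℤ G τ * x) = weightedSum F x) :
    weightedSum E x = 0 := by
  rw [weightedSum_of_mul, show (fun g => F (τ * g)) = F + E from funext hF,
    weightedSum_add_weight] at hx
  simpa using hx

end WeightedSum

lemma weightedSum_one {G R : Type*} [CommRing R] [Group G] (x : MonoidAlgebra ℤ G) :
    weightedSum (fun _ => (1 : R)) x = augGen G x := by
  induction x using MonoidAlgebra.induction_linear with
  | zero => simp
  | add x y hx hy => simp [hx, hy]
  | single g a => simp [weightedSum_single, augGen]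

lemma weightedSum_of_mul_of_map_mul {G R : Type*} [CommRing R] [Group G] {F : G → R}
    (hF : ∀ a b, F (a * b) = F a + F b) (τ : G) (x : MonoidAlgebra ℤ G) :
    weightedSum F (of ℤ G τ * x) = F τ * augGen G x + weightedSum F x := by
  rw [weightedSum_of_mul, show (fun g => F (τ * g)) = (fun _ => F τ * 1) + F from
      funext fun g => by simp [hF], weightedSum_add_weight, weightedSum_const_mul,
    weightedSum_one]

lemma weightedSum_mul_of_sub_one {G R : Type*} [CommRing R] [CommGroup G] {F : G → R}
    (hF : ∀ a b, F (a * b) = F a + F b) (x : MonoidAlgebra ℤ G) (τ : G) :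
    weightedSum F (x * (of ℤ G τ - 1)) = F τ * augGen G x := by
  rw [mul_sub, mul_one, mul_comm, map_sub, weightedSum_of_mul_of_map_mul hF, add_sub_cancel_right]

section PiMap

variable {p : ℕ}

/-- `πmap` as an additive map; the two agree definitionally. -/
def πHom (p : ℕ) : ↥(A2G12 p) →+ ZMod p :=
  (weightedSum fun g : G12t p => (Multiplicative.toAdd g).2).comp
    ((AddMonoidHom.fst _ _).comp (A2G12 p).subtype.toAddMonoidHom)

lemma augGen_fst_cast_eq_zero (v : ↥(A2G12 p)) :
    (augGen (G12t p) (v : R12 p × R12 p).1 : ZMod p) = 0 := by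
  have hv : (v : R12 p × R12 p).1 * (of ℤ (G12t p) (t1 p) - 1)
      + (v : R12 p × R12 p).2 * (of ℤ (G12t p) (t2 p) - 1) = 0 := v.2
  have h := congrArg (weightedSum fun g : G12t p => (Multiplicative.toAdd g).1) hv
  rw [map_add, weightedSum_mul_of_sub_one (fun _ _ => rfl),
    weightedSum_mul_of_sub_one (fun _ _ => rfl)] at h
  simpa [t1, t2] using h

lemma πHom_of_smul (σ : G12t p) (v : ↥(A2G12 p)) : πHom p (of ℤ (G12t p) σ • v) = πHom p v := by
  change weightedSum _ (of ℤ (G12t p) σ * (v : R12 p × R12 p).1) = _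
  rw [weightedSum_of_mul_of_map_mul (fun _ _ => rfl), augGen_fst_cast_eq_zero, mul_zero,
    zero_add]
  rfl

lemma πHom_smul_u12e (a : R12 p) : πHom p (a • u12e p) = augGen (G12t p) a := by
  change weightedSum _ (a * (of ℤ (G12t p) (t2 p) - 1)) = _
  rw [weightedSum_mul_of_sub_one (fun _ _ => rfl)]
  simp [t2]

lemma πHom_b1e : πHom p (b1e p) = 0 := by
  change weightedSum _ (NN p (t1 p)) = 0
  simp [NN, weightedSum_single, t1]

lemma πHom_smul_b2e (a : R12 p) : πHom p (a • b2e p) = 0 := by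
  change weightedSum (R := ZMod p) _ (a * 0) = 0
  rw [mul_zero, map_zero]

lemma πHom_umn (m2 n1 : ℕ) : πHom p (umn p 0 m2 n1 0) = -(n1 * m2 : ZMod p) := by
  simp [umn, πHom_smul_u12e, augGen]

lemma πHom_c12coc [NeZero p] (x y : G12t p) :
    πHom p (c12coc p x y) = -((Multiplicative.toAdd y).1 * (Multiplicative.toAdd x).2) := by
  rw [c12coc, map_add, map_add, map_nsmul, map_nsmul, πHom_of_smul, πHom_b1e, πHom_smul_b2e,
    πHom_umn]
  simp

end PiMap

lemma sum_eq_zero_of_map_inv_eq_neg {p : ℕ} (hodd : Odd p) {S : Type*} [Group S] [Fintype S]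
    (f : S → ZMod p) (hf : ∀ s, f s⁻¹ = -f s) : ∑ s, f s = 0 := by
  have hneg : ∑ s, f s = -∑ s, f s := by
    rw [← Finset.sum_neg_distrib, ← Equiv.sum_comp (Equiv.inv S) f]
    exact Finset.sum_congr rfl fun s _ => hf s
  have h2 : IsUnit (2 : ZMod p) := by
    exact_mod_cast (ZMod.isUnit_iff_coprime 2 p).mpr (Nat.coprime_two_left.mpr hodd)
  refine h2.mul_left_cancel ?_
  linear_combination hneg

lemma πHom_vH {p : ℕ} [NeZero p] (hodd : Odd p) (H : Subgroup (Gp p)) (x : G12t p) :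
    πHom p (vH p H x) = 0 := by
  have : Fintype ↥(H.map (π12 p)) := Fintype.ofFinite _
  rw [vH, finsum_eq_sum_of_fintype, map_sum]
  simp only [πHom_c12coc]
  have hsum := sum_eq_zero_of_map_inv_eq_neg hodd (S := ↥(H.map (π12 p)))
    (fun s => (Multiplicative.toAdd (s : G12t p)).1) fun _ => rfl
  rw [Finset.sum_neg_distrib, ← Finset.sum_mul, hsum, zero_mul, neg_zero]

section Cyclic

variable {p : ℕ}

lemma toAdd_c1g_pow (k : ℕ) : Multiplicative.toAdd (c1g p ^ k) = k := by
  simp [c1g, toAdd_pow]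

lemma ccyc_c1g_pow (hp : 1 < p) {a : ℕ} (ha : a < p) :
    ccyc p (c1g p ^ a) (c1g p) = if a = p - 1 then NCe p else 0 := by
  have : NeZero p := ⟨by omega⟩
  have : Fact (1 < p) := ⟨hp⟩
  have hval : (Multiplicative.toAdd (c1g p ^ a)).val = a := by
    rw [toAdd_c1g_pow, ZMod.val_natCast, Nat.mod_eq_of_lt ha]
  have hval1 : (Multiplicative.toAdd (c1g p)).val = 1 := ZMod.val_one p
  rw [ccyc, hval, hval1]
  exact if_congr (by omega) rfl rfl

lemma sum_ccyc_c1g_pow (hp : 1 < p) :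
    ∑ a ∈ Finset.range p, ccyc p (c1g p ^ a) (c1g p) = NCe p := by
  rw [Finset.sum_congr rfl fun a ha => ccyc_c1g_pow hp (Finset.mem_range.mp ha),
    Finset.sum_ite_eq', if_pos (Finset.mem_range.mpr (by omega))]

lemma augGen_NN_mul {G : Type*} [CommGroup G] (g : G) (x : MonoidAlgebra ℤ G) :
    augGen G (NN p g * x) = p * augGen G x := by
  simp [NN, augGen]

/-- Elements of `A₂(⟨σ⟩) = ker(σ - 1)` are `σ`-invariant, and `σ` raises the exponent weight by
the augmentation. -/
lemma augGen_cast_eq_zero_of_mem_A2C (x : ↥(A2C p)) : (augGen (Cpt p) x : ZMod p) = 0 := by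
  have hx : (x : RCp p) * (of ℤ (Cpt p) (c1g p) - 1) = 0 := x.2
  have hinv : of ℤ (Cpt p) (c1g p) * x = x := by linear_combination hx
  rw [← weightedSum_one]
  exact weightedSum_eq_zero_of_of_mul (F := Multiplicative.toAdd) (fun g => add_comm _ _)
    (congrArg _ hinv)

lemma dvd_of_isTwoCoboundary_nsmul_ccyc (hp : 1 < p) {H : Type*} [Group H] (φ : H →* Cpt p)
    {s : H} (hs : φ s = c1g p) (hsp : s ^ p = 1) {n : ℕ}
    (h : IsTwoCoboundary (fun h (a : ↥(A2C p)) => of ℤ (Cpt p) (φ h) • a)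
      fun h h' => n • ccyc p (φ h) (φ h')) : p ∣ n := by
  obtain ⟨c, hc⟩ := h
  beta_reduce at hc
  have hsum : n • NCe p = NN p (c1g p) • c s := by
    calc n • NCe p = ∑ a ∈ Finset.range p, n • ccyc p (φ (s ^ a)) (φ s) := by
          simp only [map_pow, hs, ← Finset.smul_sum, sum_ccyc_c1g_pow hp]
      _ = ∑ a ∈ Finset.range p,
            (of ℤ (Cpt p) (c1g p) ^ a • c s + (c (s ^ a) - c (s ^ (a + 1)))) := by
          refine Finset.sum_congr rfl fun a _ => ?_
          rw [hc, ← pow_succ, map_pow, hs, map_pow]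
          abel
      _ = NN p (c1g p) • c s := by
          rw [Finset.sum_add_distrib, Finset.sum_range_sub', hsp, pow_zero, sub_self, add_zero,
            ← Finset.sum_smul, NN]
  have haug := congrArg (fun x : ↥(A2C p) => augGen (Cpt p) (x : RCp p)) hsum
  simp only [SetLike.val_smul, smul_eq_mul, augGen_NN_mul] at haug
  have hN : augGen (Cpt p) (NN p (c1g p)) = p := by simpa using augGen_NN_mul (p := p) (c1g p) 1
  rw [Submodule.coe_smul_of_tower, map_nsmul, NCe, hN, nsmul_eq_mul] at haug
  have hn : (n : ℤ) = augGen (Cpt p) (c s) :=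
    mul_left_cancel₀ (show (p : ℤ) ≠ 0 by omega) (by rw [← haug]; ring)
  rw [← ZMod.natCast_eq_zero_iff]
  exact_mod_cast hn ▸ augGen_cast_eq_zero_of_mem_A2C (c s)

end Cyclic

lemma IsTwoCoboundary.map {G A B : Type*} [Group G] [AddCommGroup A] [AddCommGroup B]
    {actA : G → A → A} {actB : G → B → B} (φ : A →+ B)
    (hφ : ∀ g a, φ (actA g a) = actB g (φ a)) {f : G → G → A} (hf : IsTwoCoboundary actA f) :
    IsTwoCoboundary actB fun g h => φ (f g h) := by
  obtain ⟨c, hc⟩ := hf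
  refine ⟨fun g => φ (c g), fun g h => ?_⟩
  change φ (f g h) = actB g (φ (c h)) - φ (c (g * h)) + φ (c g)
  rw [hc, map_add, map_sub, hφ]

section Order

variable {p : ℕ}

lemma s3_pow_p : s3 p ^ p = 1 := by
  apply Multiplicative.toAdd.injective
  simp [s3, toAdd_pow]

/-- The `A₂(⟨σ₃⟩)`-coordinate of `Q`, with the sign that turns `ω` into `inf(c₃)`. -/
def negA2Coord (p : ℕ) : Qc p →+ ↥(A2C p) :=
  -((AddMonoidHom.fst _ _).comp ((AddMonoidHom.fst _ _).comp (AddMonoidHom.snd _ _)))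

lemma dvd_nOrd (hp : 1 < p) {H : Subgroup (Gp p)} (hs3 : s3 p ∈ H) : p ∣ nOrd p H := by
  rcases Set.eq_empty_or_nonempty {n : ℕ | 0 < n ∧
      IsTwoCoboundary (resAct H (actQ p)) fun h h' => n • ωc p (h : Gp p) (h' : Gp p)} with
    hS | hS
  · rw [nOrd, hS, Nat.sInf_empty]
    exact dvd_zero p
  · obtain ⟨-, hcb⟩ : 0 < nOrd p H ∧ IsTwoCoboundary (resAct H (actQ p))
        fun h h' => nOrd p H • ωc p (h : Gp p) (h' : Gp p) := Nat.sInf_mem hS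
    refine dvd_of_isTwoCoboundary_nsmul_ccyc hp ((π3 p).comp H.subtype) (s := ⟨s3 p, hs3⟩) rfl
      (Subtype.ext s3_pow_p) ?_
    have := hcb.map (negA2Coord p)
      (actB := fun h a => of ℤ (Cpt p) ((π3 p).comp H.subtype h) • a)
      fun g q => by simp [negA2Coord, resAct, actQ]
    simpa [negA2Coord, ωc] using this

end Order

section Lattice

variable {p : ℕ}

def projA2 (p : ℕ) : Mc p →+ ↥(A2G12 p) := (AddMonoidHom.fst _ _).comp (AddMonoidHom.fst _ _)

def projIG (p : ℕ) : Mc p →+ RG p := (IG p).subtype.toAddMonoidHom.comp (AddMonoidHom.snd _ _)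

/-- The summand `P` enters the `M_ω`-part of `g • m` only through translates of values of the
cocycles `f_H`. -/
lemma map_actMFull_fst {A : Type*} [AddCommGroup A] (φ : Mc p →+ A)
    (fH : ∀ H : ↥(HH p), ↥(H.val) → Mc p) (hφ : ∀ H g' h, φ (actM p g' (fH H h)) = 0)
    (g : Gp p) (m : MC p) : φ (actMFull p fH g m).1 = φ (actM p g m.1) := by
  change φ (actM p g m.1 + ∑ᶠ H, _) = _
  rw [map_add, add_eq_left, ← AddMonoidHom.mem_ker]
  exact finsum_induction (· ∈ φ.ker) (zero_mem _) (fun _ _ => add_mem) fun H =>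
    AddSubmonoidClass.finsuppSum_mem _ _ _ fun c _ => zsmul_mem (hφ _ _ _) _

lemma πHom_θω [NeZero p] (g : Gp p) (x : RG p) :
    πHom p (θω p g x).1
      = -(Multiplicative.toAdd g).2.1 * weightedSum (fun g' => (Multiplicative.toAdd g').1) x := by
  rw [θω, Finsupp.sum, Prod.fst_sum, map_sum, weightedSum_apply, Finsupp.sum, Finset.mul_sum]
  refine Finset.sum_congr rfl fun g' _ => ?_
  rw [Prod.smul_fst, map_zsmul, ωc, πHom_c12coc, zsmul_eq_mul]
  change (x.coeff g' : ZMod p) * -((Multiplicative.toAdd g').1 * (Multiplicative.toAdd g).2.1) = _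
  ring

lemma s3_mem_of_mem_HH {H : Subgroup (Gp p)} (hH : H ∈ HH p) : s3 p ∈ H := by
  rcases hH with rfl | ⟨τ, -, rfl⟩
  · exact Subgroup.mem_top _
  · exact Subgroup.subset_closure (by simp)

lemma s3_mem_G34sub : s3 p ∈ G34sub p := Subgroup.subset_closure (by simp)

lemma π12_eq_one_of_mem_G34sub {g : Gp p} (hg : g ∈ G34sub p) : π12 p g = 1 := by
  have hle : G34sub p ≤ (π12 p).ker := by
    rw [G34sub, Subgroup.closure_le]
    rintro x (rfl | rfl) <;> rfl
  exact hle hg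

lemma πHom_actM_fHof [NeZero p] (hodd : Odd p) (hp : 1 < p) {H : Subgroup (Gp p)}
    (hs3 : s3 p ∈ H) (zh : ↥H → Kc p × Kc p) (g : Gp p) (h : ↥H) :
    πHom p (projA2 p (actM p g (fHof p H zh h))) = 0 := by
  change πHom p (of ℤ (G12t p) (π12 p g) • -vH p H (π12 p h)
    + (θω p g ((nOrd p H • dH p H h : ↥(IG p)) : RG p)).1) = 0
  rw [map_add, πHom_of_smul, map_neg, πHom_vH hodd, neg_zero, zero_add, πHom_θω,
    Submodule.coe_smul_of_tower, map_nsmul, nsmul_eq_mul,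
    (ZMod.natCast_eq_zero_iff _ _).mpr (dvd_nOrd hp hs3), zero_mul, mul_zero]

lemma weightedSum_projIG_actM_fHof (hp : 1 < p) {H : Subgroup (Gp p)} (hs3 : s3 p ∈ H)
    (zh : ↥H → Kc p × Kc p) (F : Gp p → ZMod p) (g : Gp p) (h : ↥H) :
    weightedSum F (projIG p (actM p g (fHof p H zh h))) = 0 := by
  change weightedSum F (of ℤ (Gp p) g * ((nOrd p H • dH p H h : ↥(IG p)) : RG p)) = 0
  rw [Submodule.coe_smul_of_tower, mul_smul_comm, map_nsmul, nsmul_eq_mul,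
    (ZMod.natCast_eq_zero_iff _ _).mpr (dvd_nOrd hp hs3), zero_mul]

end Lattice

section Invariants

variable {p : ℕ}

lemma weightedSum_fst_eq_zero_of_s3_smul_eq (hp : 1 < p)
    (zH : ∀ H : ↥(HH p), ↥(H.val) → Kc p × Kc p) {m : MC p}
    (hm : actMFull p (fun H => fHof p H.val (zH H)) (s3 p) m = m) :
    weightedSum (fun g : Gp p => (Multiplicative.toAdd g).1) (m.1.2 : RG p) = 0 := by
  let F : Gp p → ZMod p := fun g => (Multiplicative.toAdd g).1 * (Multiplicative.toAdd g).2.2.1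
  have hF := congrArg (fun m : MC p => (weightedSum F).comp (projIG p) m.1) hm
  rw [map_actMFull_fst _ _ fun H g h =>
    weightedSum_projIG_actM_fHof hp (s3_mem_of_mem_HH H.2) (zH H) F g h] at hF
  exact weightedSum_eq_zero_of_of_mul (F := F) (fun g => by simp [F, s3]; ring) hF

lemma actMFull_of_mem_G34sub (fH : ∀ H : ↥(HH p), ↥(H.val) → Mc p) (v : ↥(A2G12 p))
    {g : Gp p} (hg : g ∈ G34sub p) :
    actMFull p fH g (((v, 0, 0), 0), 0) = (((v, 0, 0), 0), 0) := by
  simp [actMFull, actM, actQ, θω, actIG, π12_eq_one_of_mem_G34sub hg, ← MonoidAlgebra.one_def]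
  rfl

end Invariants

theorem statement15_general (p : ℕ) [NeZero p] (hp : p.Prime) (hodd : p ≠ 2)
    (zH : ∀ H : ↥(HH p), (↥(H.val) → Kc p × Kc p)) :
    (∀ m m' : MC p,
      (∀ g ∈ G34sub p, actMFull p (fun H => fHof p H.val (zH H)) g m = m) →
      (∀ g ∈ G34sub p, actMFull p (fun H => fHof p H.val (zH H)) g m' = m') →
      πmap' p (m + m') = πmap' p m + πmap' p m') ∧
    (∀ m : MC p,
      (∀ g ∈ G34sub p, actMFull p (fun H => fHof p H.val (zH H)) g m = m) →
      ∀ g : Gp p, πmap' p (actMFull p (fun H => fHof p H.val (zH H)) g m) = πmap' p m) ∧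
    (∀ v : ↥(A2G12 p),
      (∀ g ∈ G34sub p,
        actMFull p (fun H => fHof p H.val (zH H)) g (((v, 0, 0), 0), 0) = (((v, 0, 0), 0), 0)) ∧
      πmap' p ((((v, 0, 0), 0), 0) : MC p) = πmap p v) := by
  refine ⟨fun m m' _ _ => map_add (πHom p) _ _, fun m hm g => ?_,
    fun v => ⟨fun g hg => actMFull_of_mem_G34sub _ v hg, rfl⟩⟩
  have hy := weightedSum_fst_eq_zero_of_s3_smul_eq hp.one_lt zH (hm _ s3_mem_G34sub)
  change ((πHom p).comp (projA2 p)) (actMFull p _ g m).1 = πHom p m.1.1.1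
  rw [map_actMFull_fst _ _ fun H g h => πHom_actM_fHof (hp.odd_of_ne_two hodd) hp.one_lt
    (s3_mem_of_mem_HH H.2) (zH H) g h]
  change πHom p (of ℤ (G12t p) (π12 p g) • m.1.1.1 + (θω p g m.1.2).1) = _
  rw [map_add, πHom_of_smul, πHom_θω, hy, mul_zero, add_zero]

theorem statement15 (p : ℕ) [NeZero p] (hp : p.Prime) (hodd : p ≠ 2)
    (zH : ∀ H : ↥(HH p), (↥(H.val) → Kc p × Kc p))
    (hz : ∀ H : ↥(HH p), IsOneCocycle (resAct H.val (actM p)) (fHof p H.val (zH H))) :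
    (∀ m m' : MC p,
      (∀ g ∈ G34sub p, actMFull p (fun H => fHof p H.val (zH H)) g m = m) →
      (∀ g ∈ G34sub p, actMFull p (fun H => fHof p H.val (zH H)) g m' = m') →
      πmap' p (m + m') = πmap' p m + πmap' p m') ∧
    (∀ m : MC p,
      (∀ g ∈ G34sub p, actMFull p (fun H => fHof p H.val (zH H)) g m = m) →
      ∀ g : Gp p, πmap' p (actMFull p (fun H => fHof p H.val (zH H)) g m) = πmap' p m) ∧
    (∀ v : ↥(A2G12 p),
      (∀ g ∈ G34sub p,
        actMFull p (fun H => fHof p H.val (zH H)) g (((v, 0, 0), 0), 0) = (((v, 0, 0), 0), 0)) ∧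
      πmap' p ((((v, 0, 0), 0), 0) : MC p) = πmap p v) :=
  statement15_general p hp hodd zH

end
end
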